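/- Let N = 3 and let ρ_DS = Σ_{k=0}^3 p_k |S_k^3⟩⟨S_k^3| be a diagonal symmetric 3-qubit state (p_k ≥ 0, Σ_k p_k = 1). Then for every real α with −2/3 ≤ α ≤ √3 − 1, the matrix σ = 𝟙_S + α·ρ_DS is fully separable. -/

import Mathlib

open scoped ComplexOrder

noncomputable section

/-- Separability of an `N`-qubit matrix across the bipartition `X : Xᶜ`. -/
def SepAcross {N : ℕ} (X : Finset (Fin N))
    (σ : Matrix (Fin N → Fin 2) (Fin N → Fin 2) ℂ) : Prop :=
  ∃ (K : ℕ)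
    (A : Fin K → Matrix ({i // i ∈ X} → Fin 2) ({i // i ∈ X} → Fin 2) ℂ)
    (B : Fin K → Matrix ({i // i ∈ Xᶜ} → Fin 2) ({i // i ∈ Xᶜ} → Fin 2) ℂ),
    (∀ k, (A k).PosSemidef) ∧ (∀ k, (B k).PosSemidef) ∧
    ∀ x y, σ x y =
      ∑ k, A k (fun i => x i.1) (fun i => y i.1) * B k (fun i => x i.1) (fun i => y i.1)

/-- Partial transpose with respect to the qubits in `X`. -/
def pt {N : ℕ} (X : Finset (Fin N))
    (σ : Matrix (Fin N → Fin 2) (Fin N → Fin 2) ℂ) :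
    Matrix (Fin N → Fin 2) (Fin N → Fin 2) ℂ :=
  fun x y => σ (fun i => if i ∈ X then y i else x i) (fun i => if i ∈ X then x i else y i)

/-- The Dicke state `|S_k^N⟩`. -/
def dicke (N k : ℕ) : (Fin N → Fin 2) → ℂ :=
  fun x => if (Finset.univ.filter (fun i => x i = 1)).card = k
    then ((Real.sqrt (N.choose k))⁻¹ : ℝ) else 0

/-- The projector onto the symmetric subspace of `N` qubits. -/
def symProj (N : ℕ) : Matrix (Fin N → Fin 2) (Fin N → Fin 2) ℂ :=
  fun x y => ∑ k ∈ Finset.range (N + 1), dicke N k x * star (dicke N k y)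

/-- Full separability of an `N`-qubit matrix. -/
def FullySep {N : ℕ} (σ : Matrix (Fin N → Fin 2) (Fin N → Fin 2) ℂ) : Prop :=
  ∃ (K : ℕ) (A : Fin K → Fin N → Matrix (Fin 2) (Fin 2) ℂ),
    (∀ k i, (A k i).PosSemidef) ∧
    ∀ x y, σ x y = ∑ k, ∏ i, A k i (x i) (y i)

/-- The second Pauli matrix. -/
def pauliY : Matrix (Fin 2) (Fin 2) ℂ := !![0, -Complex.I; Complex.I, 0]

/-- The `N`-qubit operator acting as `σy` on each qubit in `X` and trivially elsewhere. -/
def pauliYat {N : ℕ} (X : Finset (Fin N)) :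
    Matrix (Fin N → Fin 2) (Fin N → Fin 2) ℂ :=
  fun x y => ∏ i, if i ∈ X then pauliY (x i) (y i) else (if x i = y i then 1 else 0)

/-- `(σy@X) · ρ^{T_X} · (σy@X)`. -/
def tildeAt {N : ℕ} (X : Finset (Fin N))
    (ρ : Matrix (Fin N → Fin 2) (Fin N → Fin 2) ℂ) :
    Matrix (Fin N → Fin 2) (Fin N → Fin 2) ℂ :=
  pauliYat X * pt X ρ * pauliYat X

/-- The Hankel matrix `M_l(q)` with entries `q_{i+j+l} / (N choose (i+j+l))`. -/
def hankel (N l : ℕ) (q : ℕ → ℝ) :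
    Matrix (Fin ((N - l) / 2 + 1)) (Fin ((N - l) / 2 + 1)) ℝ :=
  fun i j => q ((i : ℕ) + j + l) / (N.choose ((i : ℕ) + j + l))

/-- The diagonal symmetric state `Σ_k p_k |S_k^N⟩⟨S_k^N|`. -/
def rhoDS (N : ℕ) (p : ℕ → ℝ) : Matrix (Fin N → Fin 2) (Fin N → Fin 2) ℂ :=
  fun x y => ∑ k ∈ Finset.range (N + 1), (p k : ℂ) * dicke N k x * star (dicke N k y)

/-!
Both operators are diagonal in the Dicke basis, so `σ = ∑ q_k |S_k⟩⟨S_k|` with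
`q_k = 1 + α p_k`; in the computational basis its entry at `(x, y)` is `q_w / (3 choose w)`
when `x` and `y` have the same Hamming weight `w`, and `0` otherwise. Averaging the product
states `(1, t iᵏ)^{⊗3}` over the four phases `iᵏ` kills every entry between different weights
and leaves `4 t^{2w}` on weight `w`. With `t² = q₂ / q₁` and weight `q₁² / (12 q₂)` this
reproduces the weight-1 and weight-2 blocks exactly; what remains on weights 0 and 3 is a
nonnegative multiple of `|000⟩⟨000|` and `|111⟩⟨111|` precisely when `q₁² ≤ 3 q₀ q₂` and
`q₂² ≤ 3 q₁ q₃`, and for `-2/3 ≤ α ≤ √3 - 1` both inequalities hold for every probability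
vector `p`.
-/

open Finset Matrix

namespace FullySep

variable {N : ℕ} {σ τ : Matrix (Fin N → Fin 2) (Fin N → Fin 2) ℂ}

theorem zero : FullySep (0 : Matrix (Fin N → Fin 2) (Fin N → Fin 2) ℂ) :=
  ⟨0, finZeroElim, finZeroElim, fun x y => by simp⟩

theorem add (hσ : FullySep σ) (hτ : FullySep τ) : FullySep (σ + τ) := by
  obtain ⟨K, A, hA, hσ⟩ := hσ
  obtain ⟨L, B, hB, hτ⟩ := hτ
  refine ⟨K + L, Fin.append A B, fun k => ?_, fun x y => ?_⟩
  · induction k using Fin.addCases with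
    | left k => simpa using hA k
    | right k => simpa using hB k
  · simp [Fin.sum_univ_add, hσ, hτ]

theorem sum {ι : Type*} (s : Finset ι) {σ : ι → Matrix (Fin N → Fin 2) (Fin N → Fin 2) ℂ}
    (h : ∀ i ∈ s, FullySep (σ i)) : FullySep (∑ i ∈ s, σ i) := by
  classical
  induction s using Finset.induction_on with
  | empty => simpa using zero
  | insert i s hi ih =>
    rw [sum_insert hi]
    exact (h i (mem_insert_self i s)).add (ih fun j hj => h j (mem_insert_of_mem hj))

theorem smul [NeZero N] {c : ℝ} (hc : 0 ≤ c) (hσ : FullySep σ) : FullySep ((c : ℂ) • σ) := by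
  obtain ⟨K, A, hA, hσ⟩ := hσ
  refine ⟨K, fun k i => (if i = 0 then c else 1 : ℝ) • A k i,
    fun k i => (hA k i).smul (by split_ifs <;> positivity), fun x y => ?_⟩
  simp only [Matrix.smul_apply, hσ, smul_eq_mul, mul_sum]
  refine sum_congr rfl fun k _ => ?_
  rw [← mul_prod_erase _ _ (mem_univ 0), ← mul_prod_erase _ _ (mem_univ 0), ← mul_assoc]
  congr 1
  exact prod_congr rfl fun i hi => by simp [ne_of_mem_erase hi]

theorem of_prod (A : Fin N → Matrix (Fin 2) (Fin 2) ℂ) (hA : ∀ i, (A i).PosSemidef) :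
    FullySep (Matrix.of fun x y => ∏ i, A i (x i) (y i)) :=
  ⟨1, fun _ => A, fun _ => hA, fun x y => by simp⟩

end FullySep

def tensorPow (N : ℕ) (v : Fin 2 → ℂ) : (Fin N → Fin 2) → ℂ := fun x => ∏ i, v (x i)

theorem fullySep_vecMulVec_tensorPow (N : ℕ) (v : Fin 2 → ℂ) :
    FullySep (vecMulVec (tensorPow N v) (star (tensorPow N v))) := by
  convert FullySep.of_prod _ fun _ => posSemidef_vecMulVec_self_star v using 1
  ext x y
  simp [tensorPow, vecMulVec_apply, prod_mul_distrib]

def weight {N : ℕ} (x : Fin N → Fin 2) : ℕ := #{i | x i = 1}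

theorem weight_le {N : ℕ} (x : Fin N → Fin 2) : weight x ≤ N :=
  (card_filter_le _ _).trans_eq (card_fin N)

theorem tensorPow_cons_two {N : ℕ} (a b : ℂ) (x : Fin N → Fin 2) :
    tensorPow N ![a, b] x = a ^ (N - weight x) * b ^ weight x := by
  rw [tensorPow, ← prod_filter_not_mul_prod_filter univ (fun i => x i = 1)]
  have h0 : ∀ i ∈ ({i | ¬x i = 1} : Finset _), ![a, b] (x i) = a := fun i hi => by
    have hi : x i ≠ 1 := (mem_filter.1 hi).2
    simp [show x i = 0 by omega]
  have h1 : ∀ i ∈ ({i | x i = 1} : Finset _), ![a, b] (x i) = b := fun i hi => by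
    simp [(mem_filter.1 hi).2]
  rw [prod_congr rfl h0, prod_congr rfl h1, prod_const, prod_const, filter_not,
    card_sdiff_of_subset (filter_subset _ _), card_univ, Fintype.card_fin, weight]

theorem dicke_apply (N k : ℕ) (x : Fin N → Fin 2) :
    dicke N k x = if weight x = k then (((Real.sqrt (N.choose k))⁻¹ : ℝ) : ℂ) else 0 :=
  rfl

theorem rhoDS_apply {N : ℕ} (q : ℕ → ℝ) (x y : Fin N → Fin 2) :
    rhoDS N q x y =
      if weight x = weight y then ((q (weight x) / N.choose (weight x) : ℝ) : ℂ) else 0 := by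
  have hx : weight x ∈ range (N + 1) := mem_range.2 (Nat.lt_succ_of_le (weight_le x))
  rw [rhoDS, sum_eq_single_of_mem _ hx fun k _ hk => by simp [dicke_apply, Ne.symm hk]]
  by_cases h : weight x = weight y
  · simp only [dicke_apply, h, if_true, Complex.star_def, Complex.conj_ofReal]
    rw [mul_assoc, ← Complex.ofReal_mul, ← mul_inv, Real.mul_self_sqrt (Nat.cast_nonneg _)]
    push_cast
    ring
  · simp [dicke_apply, Ne.symm h, h]

theorem symProj_add_smul_rhoDS (N : ℕ) (p : ℕ → ℝ) (α : ℝ) :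
    symProj N + (α : ℂ) • rhoDS N p = rhoDS N (fun k => 1 + α * p k) := by
  ext x y
  simp only [Matrix.add_apply, Matrix.smul_apply, symProj, rhoDS, smul_eq_mul, mul_sum,
    ← sum_add_distrib]
  push_cast
  exact sum_congr rfl fun k _ => by ring

theorem IsPrimitiveRoot.sum_pow_mul_star_pow {ζ : ℂ} {n : ℕ} (hζ : IsPrimitiveRoot ζ n)
    {a b : ℕ} (ha : a < n) (hb : b < n) :
    ∑ k ∈ range n, (ζ ^ k) ^ a * star (ζ ^ k) ^ b = if a = b then (n : ℂ) else 0 := by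
  have hζ0 : ζ ≠ 0 := hζ.ne_zero (by omega)
  have hstar : star ζ = ζ⁻¹ := by
    rw [Complex.inv_def, Complex.normSq_eq_norm_sq, hζ.norm'_eq_one (by omega)]
    simp
  have hterm : ∀ k, (ζ ^ k) ^ a * star (ζ ^ k) ^ b = (ζ ^ a * ζ⁻¹ ^ b) ^ k := fun k => by
    rw [star_pow, hstar, ← pow_mul, ← pow_mul, mul_comm k a, mul_comm k b, pow_mul, pow_mul,
      mul_pow]
  simp_rw [hterm]
  split_ifs with hab
  · subst hab
    simp [hζ0]
  · have hne : ζ ^ a * ζ⁻¹ ^ b ≠ 1 := fun h =>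
      hab (hζ.pow_inj ha hb (by rwa [inv_pow, mul_inv_eq_one₀ (pow_ne_zero _ hζ0)] at h))
    have hpow : (ζ ^ a * ζ⁻¹ ^ b) ^ n = 1 := by
      rw [mul_pow, ← pow_mul, ← pow_mul, mul_comm a, mul_comm b, pow_mul, pow_mul, inv_pow,
        hζ.pow_eq_one]
      simp
    rw [geom_sum_eq hne, hpow, sub_self, zero_div]

theorem sum_vecMulVec_tensorPow_apply {N n : ℕ} {ζ : ℂ} (hζ : IsPrimitiveRoot ζ n) (hN : N < n)
    (t : ℝ) (x y : Fin N → Fin 2) :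
    (∑ k ∈ range n, vecMulVec (tensorPow N ![1, t * ζ ^ k]) (star (tensorPow N ![1, t * ζ ^ k])))
        x y = if weight x = weight y then n * (t : ℂ) ^ (2 * weight x) else 0 := by
  have hsum := hζ.sum_pow_mul_star_pow ((weight_le x).trans_lt hN) ((weight_le y).trans_lt hN)
  simp only [Matrix.sum_apply, vecMulVec_apply, Pi.star_apply, tensorPow_cons_two, one_pow,
    one_mul, star_mul', mul_pow]
  calc _ = (t : ℂ) ^ weight x * t ^ weight y *
        ∑ k ∈ range n, (ζ ^ k) ^ weight x * star (ζ ^ k) ^ weight y := by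
        rw [mul_sum]
        refine sum_congr rfl fun k _ => ?_
        simp only [Complex.star_def, map_pow, Complex.conj_ofReal]
        ring
    _ = _ := by
        rw [hsum]
        split_ifs with h
        · rw [h]; ring
        · simp

theorem fullySep_rhoDS_three {q : ℕ → ℝ} (hq1 : 0 < q 1) (hq2 : 0 < q 2)
    (h02 : q 1 ^ 2 ≤ 3 * q 0 * q 2) (h13 : q 2 ^ 2 ≤ 3 * q 1 * q 3) : FullySep (rhoDS 3 q) := by
  set t := Real.sqrt (q 2 / q 1)
  set w := q 1 ^ 2 / (12 * q 2)
  have ht : t ^ 2 = q 2 / q 1 := Real.sq_sqrt (by positivity)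
  have hw1 : 4 * w * t ^ 2 = q 1 / 3 := by simp only [w, ht]; field_simp; ring
  have hw2 : 4 * w * t ^ 4 = q 2 / 3 := by
    rw [show t ^ 4 = (t ^ 2) ^ 2 by ring, ht]; simp only [w]; field_simp; ring
  have hdecomp : rhoDS 3 q =
      ((q 0 - 4 * w : ℝ) : ℂ) • vecMulVec (tensorPow 3 ![1, 0]) (star (tensorPow 3 ![1, 0])) +
      ((q 3 - 4 * w * t ^ 6 : ℝ) : ℂ) •
        vecMulVec (tensorPow 3 ![0, 1]) (star (tensorPow 3 ![0, 1])) +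
      (w : ℂ) • ∑ k ∈ range 4, vecMulVec (tensorPow 3 ![1, t * Complex.I ^ k])
        (star (tensorPow 3 ![1, t * Complex.I ^ k])) := by
    ext x y
    simp only [Matrix.add_apply, Matrix.smul_apply,
      sum_vecMulVec_tensorPow_apply (N := 3) Complex.isPrimitiveRoot_I (by norm_num),
      vecMulVec_apply, Pi.star_apply, tensorPow_cons_two, rhoDS_apply]
    have hx := weight_le x
    have hy := weight_le y
    generalize weight x = a at *
    generalize weight y = b at *
    split_ifs with hab
    · subst hab
      have hw1C : (4 * w * t ^ 2 : ℂ) = q 1 / 3 := by exact_mod_cast hw1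
      have hw2C : (4 * w * t ^ 4 : ℂ) = q 2 / 3 := by exact_mod_cast hw2
      interval_cases a <;> simp [Nat.choose]
      · ring
      · linear_combination -hw1C
      · linear_combination -hw2C
      · ring
    · interval_cases a <;> interval_cases b <;> simp_all
  rw [hdecomp]
  refine ((FullySep.smul ?_ (fullySep_vecMulVec_tensorPow _ _)).add
    (FullySep.smul ?_ (fullySep_vecMulVec_tensorPow _ _))).add
    (FullySep.smul (by positivity) (FullySep.sum _ fun k _ => fullySep_vecMulVec_tensorPow _ _))
  · rw [sub_nonneg, show 4 * w = q 1 ^ 2 / (3 * q 2) by simp only [w]; ring,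
      div_le_iff₀ (by positivity)]
    linarith
  · rw [sub_nonneg, show 4 * w * t ^ 6 = 4 * w * t ^ 4 * t ^ 2 by ring, hw2, ht,
      div_mul_div_comm, div_le_iff₀ (by positivity)]
    linarith

theorem sq_one_add_mul_le {a b c α : ℝ} (ha : 0 ≤ a) (hb : 0 ≤ b) (hc : 0 ≤ c)
    (habc : a + b + c ≤ 1) (hα₁ : -(2 / 3) ≤ α) (hα₂ : α ≤ Real.sqrt 3 - 1) :
    (1 + α * b) ^ 2 ≤ 3 * (1 + α * a) * (1 + α * c) := by
  rcases le_total 0 α with hα | hα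
  · have h3 : (1 + α * b) ^ 2 ≤ 3 := by
      calc (1 + α * b) ^ 2 ≤ Real.sqrt 3 ^ 2 := by
            gcongr
            nlinarith [mul_le_mul_of_nonneg_left (show b ≤ 1 by linarith) hα]
        _ = 3 := Real.sq_sqrt (by norm_num)
    nlinarith [mul_nonneg hα ha, mul_nonneg hα hc,
      mul_nonneg (mul_nonneg hα ha) (mul_nonneg hα hc)]
  · -- the left side is convex in `α * b ∈ [α, 0]`, so it suffices to check the endpoints
    have hlhs : (1 + α * b) ^ 2 ≤ 3 + 3 * α * (1 - b) := by
      nlinarith [mul_nonneg (mul_nonneg_of_nonpos_of_nonpos hα (show b - 1 ≤ 0 by linarith))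
        (mul_nonneg (neg_nonneg.2 hα) hb)]
    nlinarith [mul_nonneg (mul_nonneg ha hc) (sq_nonneg α),
      mul_nonneg_of_nonpos_of_nonpos hα (show a + c - (1 - b) ≤ 0 by linarith)]

/-- For three-qubit diagonal symmetric states, `𝟙_S + α ρ_DS` is fully separable
for `-2/3 ≤ α ≤ √3 - 1`. -/
theorem stmt9 (p : ℕ → ℝ) (hp : ∀ k ≤ 3, 0 ≤ p k)
    (hsum : ∑ k ∈ Finset.range 4, p k = 1)
    (α : ℝ) (hα1 : -(2 / 3 : ℝ) ≤ α) (hα2 : α ≤ Real.sqrt 3 - 1) :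
    FullySep (symProj 3 + (α : ℂ) • rhoDS 3 p) := by
  have hp0 := hp 0 (by norm_num); have hp1 := hp 1 (by norm_num)
  have hp2 := hp 2 (by norm_num); have hp3 := hp 3 (by norm_num)
  simp only [sum_range_succ, sum_range_zero, zero_add] at hsum
  have hq : ∀ k ≤ 3, 0 < 1 + α * p k := fun k hk => by
    have hpk : p k ≤ 1 := by interval_cases k <;> linarith
    nlinarith [mul_nonneg (show 0 ≤ α + 2 / 3 by linarith) (hp k hk)]
  rw [symProj_add_smul_rhoDS]
  exact fullySep_rhoDS_three (hq 1 (by norm_num)) (hq 2 (by norm_num))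
    (sq_one_add_mul_le hp0 hp1 hp2 (by linarith) hα1 hα2)
    (sq_one_add_mul_le hp1 hp2 hp3 (by linarith) hα1 hα2)
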